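/- arXiv:2507.02837 — 2 statements merged into one kernel-verified Lean document; each statement's English description precedes it below -/
import Mathlib

section
/- Fix d ≥ 1 and a nonzero vector V ∈ ℝ^d. Let u : B₁ → ℝ be continuous and nonnegative, harmonic on {u > 0} ∩ B₁, and satisfying the viscosity supersolution free-boundary condition |∇φ(x₀)|² ≤ ∇φ(x₀)·V whenever a smooth φ touches u from below at a free boundary point x₀ ∈ ∂{u>0} ∩ B₁. If x₀ ∈ {u>0} ∩ B₁ and t > 0 are such that the segment {x₀ + sV : s ∈ [0,t]} is contained in B₁, then u(x₀ + tV) > 0. Consequently ∂{u>0} ∩ B₁ is a graph in the direction V: if u(x₀) = 0 and x₀ − tV ∈ B₁ for t > 0 with the segment in B₁, then u(x₀ − tV) = 0. -/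
open Metric Set Filter
open scoped RealInnerProductSpace Topology

noncomputable section

abbrev E (d : ℕ) := EuclideanSpace ℝ (Fin d)

/-- The Laplacian as the trace of the second derivative. -/
def laplacian {d : ℕ} (f : E d → ℝ) (x : E d) : ℝ :=
  ∑ i : Fin d, iteratedFDeriv ℝ 2 f x ![EuclideanSpace.single i 1, EuclideanSpace.single i 1]

/-- `φ` touches `u` from below at `x₀`: they agree at `x₀` and `φ ≤ u` near `x₀`. -/
def TouchesFromBelowAt {d : ℕ} (φ u : E d → ℝ) (x₀ : E d) : Prop :=
  φ x₀ = u x₀ ∧ ∀ᶠ x in 𝓝 x₀, φ x ≤ u x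

variable {d : ℕ}

lemma hasDerivAt_line {f : E d → ℝ} {x v : E d} {t : ℝ}
    (hf : DifferentiableAt ℝ f (x + t • v)) :
    HasDerivAt (fun τ : ℝ => f (x + τ • v)) (fderiv ℝ f (x + t • v) v) t := by
  have hc : HasDerivAt (fun τ : ℝ => x + τ • v) v t := by
    simpa using ((hasDerivAt_id t).smul_const v).const_add x
  exact (hf.hasFDerivAt.comp_hasDerivAt t hc)

lemma hasDerivAt_line' {f : E d → ℝ} {s : Set (E d)} (hs : IsOpen s)
    (hf : ContDiffOn ℝ 2 f s) {x : E d} (hx : x ∈ s) (v : E d) :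
    HasDerivAt (fun t : ℝ => fderiv ℝ f (x + t • v) v)
      (iteratedFDeriv ℝ 2 f x ![v, v]) 0 := by
  have hct : ContDiffAt ℝ 2 f x := hf.contDiffAt (hs.mem_nhds hx)
  have h1 : DifferentiableAt ℝ (fderiv ℝ f) x := by
    have : ContDiffAt ℝ 1 (fderiv ℝ f) x := hct.fderiv_right (by norm_num)
    exact this.differentiableAt (by norm_num)
  have hc : HasDerivAt (fun τ : ℝ => x + τ • v) v 0 := by
    simpa using ((hasDerivAt_id (0:ℝ)).smul_const v).const_add x
  have h2 : HasDerivAt (fun t : ℝ => fderiv ℝ f (x + t • v))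
      (fderiv ℝ (fderiv ℝ f) x v) 0 := by
    have h1' : HasFDerivAt (fderiv ℝ f) (fderiv ℝ (fderiv ℝ f) x) (x + (0:ℝ) • v) := by
      simpa using h1.hasFDerivAt
    exact (h1'.comp_hasDerivAt 0 hc)
  have h3 := (ContinuousLinearMap.apply ℝ ℝ v).hasFDerivAt.comp_hasDerivAt 0 h2
  have h4 : iteratedFDeriv ℝ 2 f x ![v, v] = fderiv ℝ (fderiv ℝ f) x v v := by
    rw [iteratedFDeriv_two_apply]
    simp
  rw [h4]
  exact h3

lemma iter2_eq_line_deriv {f : E d → ℝ} {s : Set (E d)} (hs : IsOpen s)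
    (hf : ContDiffOn ℝ 2 f s) {x : E d} (hx : x ∈ s) (v : E d) :
    iteratedFDeriv ℝ 2 f x ![v, v] = deriv (deriv (fun t : ℝ => f (x + t • v))) 0 := by
  have hmem : ∀ᶠ t in 𝓝 (0:ℝ), x + t • v ∈ s := by
    have hcont : Continuous (fun t : ℝ => x + t • v) := by continuity
    have : (fun t : ℝ => x + t • v) 0 ∈ s := by simpa using hx
    exact hcont.continuousAt.preimage_mem_nhds (hs.mem_nhds this)
  have heq : deriv (fun t : ℝ => f (x + t • v)) =ᶠ[𝓝 (0:ℝ)]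
      (fun t : ℝ => fderiv ℝ f (x + t • v) v) := by
    filter_upwards [hmem] with t ht
    exact (hasDerivAt_line ((hf.contDiffAt (hs.mem_nhds ht)).differentiableAt (by norm_num))).deriv
  rw [heq.deriv_eq]
  exact (hasDerivAt_line' hs hf hx v).deriv.symm

lemma secondDeriv_nonpos_of_isLocalMax {g g' : ℝ → ℝ} {c : ℝ}
    (hmax : IsLocalMax g 0) (hg : ∀ᶠ t in 𝓝 (0:ℝ), HasDerivAt g (g' t) t)
    (hg' : HasDerivAt g' c 0) : c ≤ 0 := by
  by_contra hc
  push_neg at hc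
  have h00 : HasDerivAt g (g' 0) 0 := hg.self_of_nhds
  have h0 : g' 0 = 0 := by
    have := hmax.deriv_eq_zero
    rwa [h00.deriv] at this
  -- slope of g' tends to c > 0, so g' > 0 to the right of 0
  have hslope : Tendsto (slope g' 0) (𝓝[≠] (0:ℝ)) (𝓝 c) :=
    hasDerivAt_iff_tendsto_slope.mp hg'
  have hpos : ∀ᶠ t in 𝓝[>] (0:ℝ), 0 < g' t := by
    have h1 : ∀ᶠ t in 𝓝[≠] (0:ℝ), 0 < slope g' 0 t :=
      hslope.eventually (eventually_gt_nhds hc)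
    have h2 : ∀ᶠ t in 𝓝[>] (0:ℝ), 0 < slope g' 0 t :=
      h1.filter_mono (nhdsWithin_mono 0 (fun t ht => ne_of_gt ht))
    filter_upwards [h2, self_mem_nhdsWithin] with t ht ht'
    have : slope g' 0 t = g' t / t := by
      simp [slope_def_field, h0]
    rw [this] at ht
    have := mul_pos ht (show (0:ℝ) < t from ht')
    rwa [div_mul_cancel₀] at this
    exact ne_of_gt ht'
  have hmem : ∀ᶠ t in 𝓝[>] (0:ℝ), HasDerivAt g (g' t) t ∧ g t ≤ g 0 :=
    (hg.and hmax).filter_mono nhdsWithin_le_nhds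
  obtain ⟨ε, hε, hIoo⟩ := (mem_nhdsGT_iff_exists_Ioo_subset).mp
    (hpos.and hmem)
  have hε' : (0:ℝ) < ε := hε
  have hcont : ContinuousOn g (Icc 0 (ε/2)) := by
    intro τ hτ
    rcases eq_or_lt_of_le hτ.1 with h | h
    · exact h ▸ h00.continuousAt.continuousWithinAt
    · exact ((hIoo ⟨h, by have := hτ.2; linarith⟩).2.1.continuousAt).continuousWithinAt
  have hderiv : ∀ τ ∈ interior (Icc (0:ℝ) (ε/2)), 0 < deriv g τ := by
    intro τ hτ
    rw [interior_Icc] at hτ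
    have hτ' : τ ∈ Ioo (0:ℝ) ε := ⟨hτ.1, by have := hτ.2; linarith⟩
    rw [(hIoo hτ').2.1.deriv]
    exact (hIoo hτ').1
  have hm := strictMonoOn_of_deriv_pos (convex_Icc 0 (ε/2)) hcont hderiv
  have h1 : g 0 < g (ε/2) :=
    hm (left_mem_Icc.mpr (by linarith)) (right_mem_Icc.mpr (by linarith)) (by linarith)
  have h2 : g (ε/2) ≤ g 0 := (hIoo ⟨by linarith, by linarith⟩).2.2
  linarith

lemma laplacian_le_at_localMax {φ u : E d → ℝ} {s : Set (E d)} (hs : IsOpen s)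
    (hφ : ContDiffOn ℝ 2 φ s) (hu : ContDiffOn ℝ 2 u s) {p : E d} (hp : p ∈ s)
    (hmax : IsLocalMax (fun x => φ x - u x) p) : laplacian φ p ≤ laplacian u p := by
  apply Finset.sum_le_sum
  intro i _
  set v : E d := EuclideanSpace.single i 1 with hv
  have hmem : ∀ᶠ t in 𝓝 (0:ℝ), p + t • v ∈ s := by
    have hcont : Continuous (fun t : ℝ => p + t • v) := by continuity
    have h0 : (fun t : ℝ => p + t • v) 0 ∈ s := by simpa using hp
    exact hcont.continuousAt.preimage_mem_nhds (hs.mem_nhds h0)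
  -- local max of the line function
  have hgmax : IsLocalMax (fun t : ℝ => φ (p + t • v) - u (p + t • v)) 0 := by
    have hcont : ContinuousAt (fun t : ℝ => p + t • v) 0 := by
      exact (by continuity : Continuous (fun t : ℝ => p + t • v)).continuousAt
    have hmax' : IsLocalMax (fun x => φ x - u x) ((fun t : ℝ => p + t • v) 0) := by
      simpa using hmax
    simpa [Function.comp_def] using
      IsLocalMax.comp_continuous (f := fun x => φ x - u x)
        (g := fun t : ℝ => p + t • v) (b := 0) hmax' hcont
  have hder : ∀ᶠ t in 𝓝 (0:ℝ), HasDerivAt (fun τ : ℝ => φ (p + τ • v) - u (p + τ • v))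
      (fderiv ℝ φ (p + t • v) v - fderiv ℝ u (p + t • v) v) t := by
    filter_upwards [hmem] with t ht
    exact (hasDerivAt_line ((hφ.contDiffAt (hs.mem_nhds ht)).differentiableAt (by norm_num))).sub
      (hasDerivAt_line ((hu.contDiffAt (hs.mem_nhds ht)).differentiableAt (by norm_num)))
  have hder2 : HasDerivAt (fun t : ℝ => fderiv ℝ φ (p + t • v) v - fderiv ℝ u (p + t • v) v)
      (iteratedFDeriv ℝ 2 φ p ![v, v] - iteratedFDeriv ℝ 2 u p ![v, v]) 0 :=
    (hasDerivAt_line' hs hφ hp v).sub (hasDerivAt_line' hs hu hp v)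
  have := secondDeriv_nonpos_of_isLocalMax hgmax hder hder2
  linarith

lemma comparison_principle {φ u : E d → ℝ} {O A : Set (E d)} (hO : IsOpen O)
    (hA : IsCompact A) (hOA : O ⊆ A)
    (hφ : ContDiffOn ℝ 2 φ O) (hu : ContDiffOn ℝ 2 u O)
    (hcont : ContinuousOn (fun x => φ x - u x) A)
    (hb : ∀ x ∈ A \ O, φ x ≤ u x)
    (hsub : ∀ x ∈ O, laplacian u x < laplacian φ x) :
    ∀ x ∈ A, φ x ≤ u x := by
  intro x hx
  have hne : A.Nonempty := ⟨x, hx⟩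
  obtain ⟨p, hpA, hpmax⟩ := hA.exists_isMaxOn hne hcont
  rcases le_or_gt (φ p - u p) 0 with h | h
  · have := hpmax hx
    simp only [mem_setOf_eq] at this
    linarith [this]
  · have hpO : p ∈ O := by
      by_contra hpO
      have := hb p ⟨hpA, hpO⟩
      linarith
    have hlocal : IsLocalMax (fun x => φ x - u x) p := by
      filter_upwards [hO.mem_nhds hpO] with y hy
      exact hpmax (hOA hy)
    have := laplacian_le_at_localMax hO hφ hu hpO hlocal
    have := hsub p hpO
    linarith

lemma deriv2_quad_exp (a lam c0 p K : ℝ) :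
    deriv (deriv (fun t : ℝ => a * Real.exp (-lam * (c0 + 2*p*t + t^2)) - K)) 0
      = a * Real.exp (-lam * c0) * (4*lam^2*p^2 - 2*lam) := by
  have hq : ∀ t : ℝ, HasDerivAt (fun t : ℝ => -lam * (c0 + 2*p*t + t^2))
      (-lam * (2*p + 2*t)) t := by
    intro t
    have ha : HasDerivAt (fun t : ℝ => c0 + 2*p*t) (2*p) t := by
      simpa using ((hasDerivAt_id t).const_mul (2*p)).const_add c0
    have hb : HasDerivAt (fun t : ℝ => t^2) (2*t) t := by
      simpa using hasDerivAt_pow 2 t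
    simpa using (ha.add hb).const_mul (-lam)
  have hF : ∀ t : ℝ, HasDerivAt (fun t : ℝ => a * Real.exp (-lam * (c0 + 2*p*t + t^2)) - K)
      (a * Real.exp (-lam * (c0 + 2*p*t + t^2)) * (-lam * (2*p + 2*t))) t := by
    intro t
    have := ((hq t).exp.const_mul a).sub_const K
    exact this.congr_deriv (by ring)
  have hderiv1 : deriv (fun t : ℝ => a * Real.exp (-lam * (c0 + 2*p*t + t^2)) - K)
      = fun t : ℝ => a * Real.exp (-lam * (c0 + 2*p*t + t^2)) * (-lam * (2*p + 2*t)) :=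
    funext fun t => (hF t).deriv
  rw [hderiv1]
  have h1 : HasDerivAt (fun t : ℝ => a * Real.exp (-lam * (c0 + 2*p*t + t^2)))
      (a * Real.exp (-lam * (c0 + 2*p*0 + 0^2)) * (-lam * (2*p + 2*0))) 0 := by
    have := (hq 0).exp.const_mul a
    exact this.congr_deriv (by ring)
  have h2 : HasDerivAt (fun t : ℝ => -lam * (2*p + 2*t)) (-lam * 2) 0 := by
    have : HasDerivAt (fun t : ℝ => 2*p + 2*t) 2 0 := by
      simpa using ((hasDerivAt_id (0:ℝ)).const_mul 2).const_add (2*p)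
    simpa using this.const_mul (-lam)
  rw [HasDerivAt.deriv (f := fun t : ℝ => a * Real.exp (-lam * (c0 + 2*p*t + t^2)) * (-lam * (2*p + 2*t))) (h1.mul h2)]
  norm_num
  ring

lemma contDiff_phi (a lam K : ℝ) (z : E d) :
    ContDiff ℝ (⊤ : ℕ∞) (fun y : E d => a * Real.exp (-lam * ‖y - z‖^2) - K) := by
  have h1 : ContDiff ℝ (⊤ : ℕ∞) (fun y : E d => ‖y - z‖^2) :=
    ContDiff.norm_sq ℝ (contDiff_id.sub contDiff_const)
  exact (contDiff_const.mul (Real.contDiff_exp.comp (contDiff_const.mul h1))).sub contDiff_const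

lemma sum_coord_sq (y : E d) : ∑ i : Fin d, (y i)^2 = ‖y‖^2 := by
  rw [EuclideanSpace.norm_eq]
  rw [Real.sq_sqrt (by positivity)]
  congr 1
  funext i
  rw [Real.norm_eq_abs, sq_abs]

lemma laplacian_radial_exp (a lam K : ℝ) (z x : E d) :
    laplacian (fun y : E d => a * Real.exp (-lam * ‖y - z‖^2) - K) x
      = a * Real.exp (-lam * ‖x - z‖^2) * (4*lam^2*‖x - z‖^2 - 2*lam*d) := by
  unfold laplacian
  have hmain : ∀ i : Fin d,
      iteratedFDeriv ℝ 2 (fun y : E d => a * Real.exp (-lam * ‖y - z‖^2) - K) x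
        ![EuclideanSpace.single i 1, EuclideanSpace.single i 1]
      = a * Real.exp (-lam * ‖x - z‖^2) * (4*lam^2*((x - z) i)^2 - 2*lam) := by
    intro i
    rw [iter2_eq_line_deriv isOpen_univ
      ((contDiff_phi a lam K z).of_le (WithTop.coe_le_coe.mpr (le_top : (2:ℕ∞) ≤ ⊤))).contDiffOn (mem_univ x)]
    have hline : (fun t : ℝ =>
          a * Real.exp (-lam * ‖(x + t • EuclideanSpace.single i (1:ℝ)) - z‖^2) - K)
        = fun t : ℝ =>
          a * Real.exp (-lam * (‖x - z‖^2 + 2*((x - z) i)*t + t^2)) - K := by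
      funext t
      have h1 : x + t • EuclideanSpace.single i (1:ℝ) - z
          = (x - z) + t • EuclideanSpace.single i (1:ℝ) := by
        abel
      rw [h1, norm_add_sq_real]
      have h2 : ⟪x - z, t • EuclideanSpace.single i (1:ℝ)⟫
          = t * ((x - z) i) := by
        rw [real_inner_smul_right, EuclideanSpace.inner_single_right]
        simp [mul_comm]
      have h3 : ‖t • EuclideanSpace.single i (1:ℝ)‖^2 = t^2 := by
        rw [norm_smul, EuclideanSpace.norm_single]
        simp [mul_pow, sq_abs]
      rw [h2, h3]
      ring_nf
    rw [hline, deriv2_quad_exp]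
  rw [Finset.sum_congr rfl fun i _ => hmain i]
  have : ∑ i : Fin d, a * Real.exp (-lam * ‖x - z‖^2) * (4*lam^2*((x - z) i)^2 - 2*lam)
      = a * Real.exp (-lam * ‖x - z‖^2) *
        (4*lam^2*(∑ i : Fin d, ((x - z) i)^2) - 2*lam*d) := by
    set A := a * Real.exp (-lam * ‖x - z‖^2) with hA
    have e1 : ∀ i : Fin d, A * (4*lam^2*((x - z) i)^2 - 2*lam)
        = (A*4*lam^2)*((x - z) i)^2 - A*2*lam := fun i => by ring
    rw [Finset.sum_congr rfl (fun i _ => e1 i), Finset.sum_sub_distrib,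
      ← Finset.mul_sum, Finset.sum_const, Finset.card_univ, Fintype.card_fin]
    simp only [nsmul_eq_mul]
    ring
  rw [this, sum_coord_sq]

lemma hasGradientAt_phi (a lam K : ℝ) (z x : E d) :
    HasGradientAt (fun y : E d => a * Real.exp (-lam * ‖y - z‖^2) - K)
      ((a * Real.exp (-lam * ‖x - z‖^2) * (-2*lam)) • (x - z)) x := by
  have hsub : HasFDerivAt (fun y : E d => y - z) (ContinuousLinearMap.id ℝ (E d)) x :=
    (hasFDerivAt_id x).sub_const z
  have hN : HasFDerivAt (fun y : E d => ‖y - z‖^2)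
      (2 • ((innerSL ℝ (x - z)).comp (ContinuousLinearMap.id ℝ (E d)))) x := hsub.norm_sq
  have houter : HasDerivAt (fun s : ℝ => a * Real.exp (-lam * s) - K)
      (a * Real.exp (-lam * ‖x - z‖^2) * (-lam)) (‖x - z‖^2) := by
    have := (((hasDerivAt_id (‖x - z‖^2)).const_mul (-lam)).exp.const_mul a).sub_const K
    simp only [id_eq] at this
    exact this.congr_deriv (by ring)
  have hcomp := houter.comp_hasFDerivAt x hN
  rw [hasGradientAt_iff_hasFDerivAt]
  refine hcomp.congr_fderiv ?_
  ext y
  simp only [InnerProductSpace.toDual_apply_apply, ContinuousLinearMap.coe_smul',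
    Pi.smul_apply, ContinuousLinearMap.coe_comp', Function.comp_apply,
    ContinuousLinearMap.coe_id', id_eq, innerSL_apply_apply, smul_eq_mul]
  rw [real_inner_smul_left]
  ring

set_option maxHeartbeats 1000000 in
/-- Key step: at a closest zero-point `w` to `z`, the viscosity condition forces
`⟪z - w, V⟫ ≥ 0`. -/
lemma key_step
    (d : ℕ) (hd : 1 ≤ d) (V : E d)
    (u : E d → ℝ) (hu : ContinuousOn u (ball 0 1)) (hunn : ∀ x, 0 ≤ u x)
    (husm : ContDiffOn ℝ 2 u ({x | 0 < u x} ∩ ball 0 1))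
    (hharm : ∀ x ∈ {x | 0 < u x} ∩ ball 0 1, laplacian u x = 0)
    (hfb : ∀ x₀ ∈ frontier {x | 0 < u x} ∩ ball 0 1, ∀ φ : E d → ℝ,
      ContDiff ℝ (⊤ : ℕ∞) φ → TouchesFromBelowAt φ u x₀ →
      ‖gradient φ x₀‖ ^ 2 ≤ ⟪gradient φ x₀, V⟫)
    {z w : E d} (hz : z ∈ ball (0:E d) 1)
    (hwZ : w ∈ closure {x | x ∈ ball (0:E d) 1 ∧ u x = 0})
    (hr : dist z w = infDist z (closure {x | x ∈ ball (0:E d) 1 ∧ u x = 0}))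
    (hrpos : 0 < dist z w) (hrlt : dist z w < 1 - ‖z‖) :
    0 ≤ ⟪z - w, V⟫ := by
  set Z := closure {x | x ∈ ball (0:E d) 1 ∧ u x = 0} with hZ
  set r := dist z w with hrdef
  -- the closed ball around z is inside the unit ball
  have hzb : closedBall z r ⊆ ball (0:E d) 1 := by
    intro y hy
    have h1 : dist y 0 ≤ dist y z + dist z 0 := dist_triangle y z 0
    have h2 : dist y z ≤ r := mem_closedBall.mp hy
    have h3 : dist z 0 = ‖z‖ := by simp
    have : dist y 0 < 1 := by rw [h3] at h1; linarith
    exact mem_ball.mpr this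
  have hwb : w ∈ ball (0:E d) 1 := hzb (mem_closedBall.mpr (by rw [dist_comm]))
  -- u vanishes at w
  have huw : u w = 0 := by
    obtain ⟨g, hg, hgt⟩ := mem_closure_iff_seq_limit.mp hwZ
    have hcont : ContinuousAt u w := hu.continuousAt (isOpen_ball.mem_nhds hwb)
    have h1 : Tendsto (fun n => u (g n)) atTop (𝓝 (u w)) := hcont.tendsto.comp hgt
    have h2 : (fun n => u (g n)) = fun _ => (0:ℝ) := funext fun n => (hg n).2
    rw [h2] at h1
    exact tendsto_nhds_unique h1 tendsto_const_nhds
  -- u is positive on the open ball around z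
  have hpos : ∀ x ∈ ball z r, 0 < u x := by
    intro x hx
    have hxb : x ∈ ball (0:E d) 1 := hzb (ball_subset_closedBall hx)
    rcases lt_or_eq_of_le (hunn x) with h | h
    · exact h
    · exfalso
      have hxZ : x ∈ Z := subset_closure ⟨hxb, h.symm⟩
      have := infDist_le_dist_of_mem hxZ (x := z)
      rw [← hr] at this
      exact absurd this (not_le.mpr (mem_ball'.mp hx))
  -- w is on the free boundary
  have hwf : w ∈ frontier {x | 0 < u x} := by
    constructor
    · have h1 : w ∈ closure (ball z r) := by
        rw [closure_ball z (ne_of_gt hrpos)]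
        exact mem_closedBall.mpr (by rw [dist_comm])
      exact closure_mono (fun x hx => hpos x hx) h1
    · intro hw
      have := interior_subset hw
      simp only [mem_setOf_eq, huw] at this
      exact lt_irrefl 0 this
  -- the barrier
  set lam : ℝ := 4 * d / r^2 with hlam
  have hd0 : (0:ℝ) < d := by exact_mod_cast hd
  have hlampos : 0 < lam := by positivity
  -- minimum of u on the middle sphere
  have hsne : (sphere z (r/2)).Nonempty := by
    haveI : Nonempty (Fin d) := ⟨⟨0, hd⟩⟩
    exact NormedSpace.sphere_nonempty.mpr (by positivity)
  have hsomewhere : sphere z (r/2) ⊆ ball z r := sphere_subset_ball (by linarith)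
  obtain ⟨xm, hxm, hmin⟩ := (isCompact_sphere z (r/2)).exists_isMinOn hsne
    (hu.mono (fun x hx => hzb (ball_subset_closedBall (hsomewhere hx))))
  set m : ℝ := u xm with hm
  have hmpos : 0 < m := hpos xm (hsomewhere hxm)
  have hden : 0 < Real.exp (-lam * (r/2)^2) - Real.exp (-lam * r^2) := by
    have : -lam * r^2 < -lam * (r/2)^2 := by
      nlinarith [mul_pos hlampos (mul_pos hrpos hrpos)]
    have := Real.exp_lt_exp.mpr this
    linarith
  set a : ℝ := m / (Real.exp (-lam * (r/2)^2) - Real.exp (-lam * r^2)) with ha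
  have hapos : 0 < a := div_pos hmpos hden
  set K : ℝ := a * Real.exp (-lam * r^2) with hK
  set φ : E d → ℝ := fun y => a * Real.exp (-lam * ‖y - z‖^2) - K with hφ
  have hφsm : ContDiff ℝ (⊤ : ℕ∞) φ := contDiff_phi a lam K z
  -- comparison on the annulus
  set O : Set (E d) := ball z r \ closedBall z (r/2) with hO
  set A : Set (E d) := closedBall z r \ ball z (r/2) with hA
  have hOopen : IsOpen O := isOpen_ball.sdiff Metric.isClosed_closedBall
  have hAcomp : IsCompact A := (isCompact_closedBall z r).diff isOpen_ball
  have hOA : O ⊆ A := fun x hx =>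
    ⟨ball_subset_closedBall hx.1, fun hc => hx.2 (ball_subset_closedBall hc)⟩
  have hOsub : O ⊆ {x | 0 < u x} ∩ ball (0:E d) 1 := by
    intro x hx
    exact ⟨hpos x hx.1, hzb (ball_subset_closedBall hx.1)⟩
  have hcomp : ∀ x ∈ A, φ x ≤ u x := by
    apply comparison_principle hOopen hAcomp hOA (hφsm.of_le (WithTop.coe_le_coe.mpr (le_top : (2:ℕ∞) ≤ ⊤))).contDiffOn
      (husm.mono hOsub)
    · exact (hφsm.continuous.continuousOn.sub (hu.mono (fun x hx => hzb hx.1))).mono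
        (fun x hx => hx)
    · -- boundary values
      intro x hx
      obtain ⟨⟨hx1, hx2⟩, hxO⟩ := hx
      rcases eq_or_lt_of_le (mem_closedBall.mp hx1) with h | h
      · -- outer sphere
        have : ‖x - z‖^2 = r^2 := by
          rw [← dist_eq_norm]; rw [h]
        simp only [hφ, this]
        have : a * Real.exp (-lam * r ^ 2) - K = 0 := by rw [hK]; ring
        rw [this]
        exact hunn x
      · -- inner sphere
        have hx3 : x ∈ closedBall z (r/2) := by
          by_contra hc
          exact hxO ⟨mem_ball.mpr h, hc⟩
        have hx4 : dist x z = r/2 := le_antisymm (mem_closedBall.mp hx3) (not_lt.mp hx2)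
        have : ‖x - z‖^2 = (r/2)^2 := by rw [← dist_eq_norm, hx4]
        simp only [hφ, this]
        have he : a * Real.exp (-lam * (r/2) ^ 2) - K = m := by
          rw [hK, ← mul_sub, ha, div_mul_cancel₀ _ hden.ne']
        rw [he]
        exact hmin (mem_sphere.mpr hx4)
    · -- strict subharmonicity
      intro x hx
      rw [hharm x (hOsub hx), hφ, laplacian_radial_exp]
      have h1 : r/2 < dist x z := not_le.mp (fun hc => hx.2 (mem_closedBall.mpr hc))
      have h2 : (r/2)^2 < ‖x - z‖^2 := by
        rw [← dist_eq_norm]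
        have : 0 ≤ r/2 := by linarith
        nlinarith
      have h3 : 0 < Real.exp (-lam * ‖x - z‖^2) := Real.exp_pos _
      have h4 : 0 < 4*lam^2*‖x - z‖^2 - 2*lam*d := by
        have hlr : lam * r^2 = 4*d := by
          rw [hlam]; field_simp
        nlinarith [mul_pos hlampos hlampos, sq_nonneg r]
      positivity
  -- φ touches u from below at w
  have htouch : TouchesFromBelowAt φ u w := by
    constructor
    · have : ‖w - z‖^2 = r^2 := by rw [← dist_eq_norm, dist_comm]
      simp only [hφ, this, huw, hK]; ring
    · have hball : ball w (r/2) ∈ 𝓝 w := isOpen_ball.mem_nhds (mem_ball_self (by linarith))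
      filter_upwards [hball] with x hx
      rcases le_or_gt (dist x z) r with h | h
      · -- inside the annulus
        have h1 : r/2 < dist x z := by
          have h2 : r ≤ dist z x + dist x w := dist_triangle z x w
          have h3 : dist x w < r/2 := mem_ball.mp hx
          have h4 : dist z x = dist x z := dist_comm z x
          linarith
        exact hcomp x ⟨mem_closedBall.mpr h, fun hc => absurd (mem_ball.mp hc) (not_lt.mpr h1.le)⟩
      · -- outside the ball : φ ≤ 0 ≤ u
        have h1 : r^2 < ‖x - z‖^2 := by
          rw [← dist_eq_norm]
          nlinarith [hrpos.le, dist_nonneg (x := x) (y := z)]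
        have h2 : Real.exp (-lam * ‖x - z‖^2) < Real.exp (-lam * r^2) := by
          apply Real.exp_lt_exp.mpr
          nlinarith
        have : φ x < 0 := by
          simp only [hφ, hK]
          nlinarith
        linarith [hunn x]
  -- apply the free boundary condition
  have hgrad : gradient φ w = (a * Real.exp (-lam * ‖w - z‖^2) * (-2*lam)) • (w - z) :=
    (hasGradientAt_phi a lam K z w).gradient
  have hineq := hfb w ⟨hwf, hwb⟩ φ hφsm htouch
  rw [hgrad] at hineq
  set c : ℝ := a * Real.exp (-lam * ‖w - z‖^2) * (-2*lam) with hc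
  have hcneg : c < 0 := by
    have := Real.exp_pos (-lam * ‖w - z‖^2)
    have : 0 < a * Real.exp (-lam * ‖w - z‖^2) * (2*lam) := by positivity
    linarith
  have h5 : 0 ≤ ⟪c • (w - z), V⟫ := le_trans (by positivity) hineq
  rw [real_inner_smul_left] at h5
  have h7 : ⟪z - w, V⟫ = -⟪w - z, V⟫ := by
    rw [show z - w = -(w - z) by abel, inner_neg_left]
  rw [h7]
  by_contra hcon
  push_neg at hcon
  have hpos' : 0 < ⟪w - z, V⟫ := by linarith
  have : c * ⟪w - z, V⟫ < 0 := mul_neg_of_neg_of_pos hcneg hpos'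
  linarith


set_option maxHeartbeats 1000000 in
/-- graphical property of the free boundary in the direction `V`. -/
theorem free_boundary_graphical
    (d : ℕ) (hd : 1 ≤ d) (V : E d) (hV : V ≠ 0)
    (u : E d → ℝ) (hu : ContinuousOn u (ball 0 1)) (hunn : ∀ x, 0 ≤ u x)
    (husm : ContDiffOn ℝ 2 u ({x | 0 < u x} ∩ ball 0 1))
    (hharm : ∀ x ∈ {x | 0 < u x} ∩ ball 0 1, laplacian u x = 0)
    (hfb : ∀ x₀ ∈ frontier {x | 0 < u x} ∩ ball 0 1, ∀ φ : E d → ℝ,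
      ContDiff ℝ (⊤ : ℕ∞) φ → TouchesFromBelowAt φ u x₀ →
      ‖gradient φ x₀‖ ^ 2 ≤ ⟪gradient φ x₀, V⟫) :
    (∀ x₀ ∈ {x | 0 < u x} ∩ ball (0 : E d) 1, ∀ t : ℝ, 0 < t →
      (∀ s ∈ Icc (0:ℝ) t, x₀ + s • V ∈ ball (0 : E d) 1) →
      0 < u (x₀ + t • V)) ∧
    (∀ x₀ ∈ ball (0 : E d) 1, u x₀ = 0 → ∀ t : ℝ, 0 < t →
      (∀ s ∈ Icc (0:ℝ) t, x₀ - s • V ∈ ball (0 : E d) 1) →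
      u (x₀ - t • V) = 0) := by
  have hVpos : (0:ℝ) < ‖V‖ := norm_pos_iff.mpr hV
  have P1 : ∀ x₀ ∈ {x | 0 < u x} ∩ ball (0 : E d) 1, ∀ t : ℝ, 0 < t →
      (∀ s ∈ Icc (0:ℝ) t, x₀ + s • V ∈ ball (0 : E d) 1) →
      0 < u (x₀ + t • V) := by
    intro x₀ hx₀ t ht hseg
    by_contra hcon
    have h0 : u (x₀ + t • V) = 0 := le_antisymm (not_lt.mp hcon) (hunn _)
    set Z := closure {x | x ∈ ball (0:E d) 1 ∧ u x = 0} with hZdef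
    have hZclosed : IsClosed Z := isClosed_closure
    have htZ : x₀ + t • V ∈ Z := subset_closure ⟨hseg t ⟨ht.le, le_rfl⟩, h0⟩
    have hZne : Z.Nonempty := ⟨_, htZ⟩
    set f : ℝ → ℝ := fun s => infDist (x₀ + s • V) Z with hfdef
    have hfcont : Continuous f :=
      (continuous_infDist_pt Z).comp (by continuity)
    -- the one-step inequality
    have step : ∀ s h : ℝ, s ∈ Icc 0 t → s + h ∈ Icc 0 t → 0 ≤ h →
        0 < f (s + h) → f (s + h) < 1 - ‖x₀ + (s + h) • V‖ →
        f s ^ 2 ≤ f (s + h) ^ 2 + h ^ 2 * ‖V‖ ^ 2 := by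
      intro s h hs hsh hh hfpos hflt
      set z' : E d := x₀ + (s + h) • V with hz'
      obtain ⟨w, hwZ, hwd⟩ := hZclosed.exists_infDist_eq_dist hZne z'
      have hd1 : dist z' w = f (s + h) := by rw [hfdef]; exact hwd.symm
      have hkey : 0 ≤ ⟪z' - w, V⟫ := by
        apply key_step d hd V u hu hunn husm hharm hfb (hseg (s+h) hsh) hwZ
        · rw [← hZdef, hwd]
        · rw [hd1]; exact hfpos
        · rw [hd1]; exact hflt
      have hle : f s ≤ dist (x₀ + s • V) w := infDist_le_dist_of_mem hwZ
      have hdec : x₀ + s • V - w = (z' - w) - h • V := by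
        rw [hz', add_smul]; abel
      have hnorm : dist (x₀ + s • V) w ^ 2 = f (s+h)^2 - 2 * (h * ⟪z' - w, V⟫)
          + h^2 * ‖V‖^2 := by
        rw [dist_eq_norm, hdec, norm_sub_sq_real, real_inner_smul_right]
        rw [show ‖z' - w‖ = f (s+h) by rw [← hd1, dist_eq_norm]]
        rw [norm_smul]
        simp [mul_pow, sq_abs]
      have h2 : f s ^ 2 ≤ dist (x₀ + s • V) w ^ 2 :=
        pow_le_pow_left₀ infDist_nonneg hle 2
      have h3 : 0 ≤ h * ⟪z' - w, V⟫ := mul_nonneg hh hkey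
      rw [hnorm] at h2
      linarith
    -- the first zero along the segment
    set S : Set ℝ := {s | s ∈ Icc 0 t ∧ f s = 0} with hSdef
    have hSclosed : IsClosed S := by
      have : S = Icc 0 t ∩ f ⁻¹' {0} := by
        ext s; simp [hSdef]
      rw [this]
      exact isClosed_Icc.inter (isClosed_singleton.preimage hfcont)
    have hSne : S.Nonempty := ⟨t, ⟨⟨ht.le, le_rfl⟩, by
      rw [hfdef]; exact infDist_zero_of_mem htZ⟩⟩
    have hSbdd : BddBelow S := ⟨0, fun s hs => hs.1.1⟩
    set σ : ℝ := sInf S with hσdef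
    have hσS : σ ∈ S := hSclosed.csInf_mem hSne hSbdd
    have hσIcc : σ ∈ Icc 0 t := hσS.1
    have hfσ : f σ = 0 := hσS.2
    -- f is positive at 0
    have hopen : IsOpen ({x | 0 < u x} ∩ ball (0:E d) 1) := by
      have heq : {x | 0 < u x} ∩ ball (0:E d) 1 = ball (0:E d) 1 ∩ u ⁻¹' (Ioi 0) := by
        ext x; simp [and_comm, mem_preimage]
      rw [heq]
      exact hu.isOpen_inter_preimage isOpen_ball isOpen_Ioi
    obtain ⟨ρ, hρpos, hρsub⟩ := Metric.isOpen_iff.mp hopen x₀ hx₀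
    have hf0 : 0 < f 0 := by
      rcases lt_or_eq_of_le (infDist_nonneg (x := x₀ + (0:ℝ) • V) (s := Z)) with h | h
      · exact h
      · exfalso
        have hx₀Z : x₀ + (0:ℝ) • V ∈ Z :=
          (hZclosed.mem_iff_infDist_zero hZne (x := x₀ + (0:ℝ) • V)).mpr h.symm
        have hx₀Z' : x₀ ∈ Z := by simpa using hx₀Z
        obtain ⟨y, hy1, hy2⟩ := mem_closure_iff.mp hx₀Z' (ball x₀ ρ) isOpen_ball
          (mem_ball_self hρpos)
        exact absurd hy2.2 (ne_of_gt (hρsub hy1).1)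
    have hσpos : 0 < σ := by
      rcases lt_or_eq_of_le hσIcc.1 with h | h
      · exact h
      · exfalso; rw [← h] at hfσ; rw [hfσ] at hf0; exact lt_irrefl 0 hf0
    -- uniform interior distance δ
    obtain ⟨s₀, hs₀, hs₀min⟩ := (isCompact_Icc (a := (0:ℝ)) (b := t)).exists_isMinOn
      ⟨0, left_mem_Icc.mpr ht.le⟩
      ((Continuous.continuousOn (by continuity : Continuous (fun s : ℝ => 1 - ‖x₀ + s • V‖))))
    set δ : ℝ := 1 - ‖x₀ + s₀ • V‖ with hδdef
    have hδpos : 0 < δ := by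
      have := mem_ball_zero_iff.mp (hseg s₀ hs₀)
      linarith
    have hδle : ∀ s ∈ Icc (0:ℝ) t, δ ≤ 1 - ‖x₀ + s • V‖ := fun s hs => hs₀min hs
    -- the window
    set η : ℝ := min (σ/2) (δ/(2*‖V‖)) with hηdef
    have hηpos : 0 < η := lt_min (by linarith) (by positivity)
    have hη1 : η ≤ σ/2 := min_le_left _ _
    have hη2 : η ≤ δ/(2*‖V‖) := min_le_right _ _
    have hwIcc : ∀ s : ℝ, σ - η ≤ s → s ≤ σ → s ∈ Icc 0 t :=
      fun s h1 h2 => ⟨by linarith [hσIcc.1], le_trans h2 hσIcc.2⟩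
    have hfsmall : ∀ s : ℝ, σ - η ≤ s → s ≤ σ → f s ≤ (σ - s) * ‖V‖ := by
      intro s h1 h2
      have ha : f s ≤ f σ + dist (x₀ + s • V) (x₀ + σ • V) := infDist_le_infDist_add_dist
      have hb : dist (x₀ + s • V) (x₀ + σ • V) = (σ - s) * ‖V‖ := by
        rw [dist_eq_norm]
        have : x₀ + s • V - (x₀ + σ • V) = (s - σ) • V := by
          rw [sub_smul]; abel
        rw [this, norm_smul, Real.norm_eq_abs, abs_of_nonpos (by linarith)]
        ring
      rw [hfσ, hb] at ha
      linarith
    have hfpos' : ∀ s : ℝ, σ - η ≤ s → s < σ → 0 < f s := by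
      intro s h1 h2
      rcases lt_or_eq_of_le (infDist_nonneg (x := x₀ + s • V) (s := Z)) with h | h
      · exact h
      · exfalso
        have : s ∈ S := ⟨hwIcc s h1 h2.le, h.symm⟩
        exact absurd (csInf_le hSbdd this) (not_le.mpr h2)
    have hflt' : ∀ s : ℝ, σ - η ≤ s → s ≤ σ → f s < δ := by
      intro s h1 h2
      have := hfsmall s h1 h2
      have h3 : (σ - s) * ‖V‖ ≤ η * ‖V‖ :=
        mul_le_mul_of_nonneg_right (by linarith) hVpos.le
      have h4 : η * ‖V‖ ≤ δ/2 := by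
        calc η * ‖V‖ ≤ (δ/(2*‖V‖)) * ‖V‖ := mul_le_mul_of_nonneg_right hη2 hVpos.le
        _ = δ/2 := by field_simp
      linarith
    -- iteration
    have iter : ∀ n : ℕ, 0 < n →
        f (σ - η)^2 ≤ η^2 * ‖V‖^2 / (n+1) := by
      intro n hn
      set hstep : ℝ := η / (n+1) with hhdef
      have hnpos : (0:ℝ) < n := by exact_mod_cast hn
      have hhpos : 0 < hstep := by positivity
      have claim : ∀ k : ℕ, k ≤ n →
          f (σ - η)^2 ≤ f (σ - η + k * hstep)^2 + k * (hstep^2 * ‖V‖^2) := by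
        intro k hk
        induction k with
        | zero => simp
        | succ k ih =>
          have hk' : k ≤ n := le_trans (Nat.le_succ k) hk
          have ih' := ih hk'
          have hkr : (k:ℝ) ≤ n := by exact_mod_cast hk'
          have hk1r : ((k:ℝ)+1) ≤ n := by exact_mod_cast hk
          have hnstep : (n:ℝ) * hstep < η := by
            have hlt : (n:ℝ)/(n+1) < 1 := (div_lt_one (by positivity)).mpr (by linarith)
            calc (n:ℝ) * hstep = η * ((n:ℝ)/(n+1)) := by rw [hhdef]; ring
            _ < η * 1 := mul_lt_mul_of_pos_left hlt hηpos
            _ = η := mul_one η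
          set s : ℝ := σ - η + k * hstep with hsdef2
          have hknn : (0:ℝ) ≤ (k:ℝ) * hstep :=
            mul_nonneg (Nat.cast_nonneg k) hhpos.le
          have hsge : σ - η ≤ s := by rw [hsdef2]; linarith
          have hsh_le : s + hstep ≤ σ - (η - n*hstep) := by
            have h9 : (k:ℝ)*hstep + hstep ≤ (n:ℝ)*hstep := by nlinarith
            rw [hsdef2]; linarith
          have hshlt : s + hstep < σ := by linarith
          have hshge : σ - η ≤ s + hstep := by linarith
          have hIcc1 : s ∈ Icc 0 t := hwIcc s hsge (by linarith)
          have hIcc2 : s + hstep ∈ Icc 0 t := hwIcc _ hshge hshlt.le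
          have hfp : 0 < f (s + hstep) := hfpos' _ hshge hshlt
          have hfl : f (s + hstep) < 1 - ‖x₀ + (s+hstep) • V‖ :=
            lt_of_lt_of_le (hflt' _ hshge hshlt.le) (hδle _ hIcc2)
          have hst := step s hstep hIcc1 hIcc2 hhpos.le hfp hfl
          have hrw : σ - η + (↑(k+1) : ℝ) * hstep = s + hstep := by
            rw [hsdef2]; push_cast; ring
          rw [hrw]
          push_cast
          push_cast at ih'
          linarith
      -- conclude from k = n
      have hcl := claim n le_rfl
      have hnn : (0:ℝ) ≤ (n:ℝ) * hstep := mul_nonneg (Nat.cast_nonneg n) hhpos.le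
      have hnstep : (n:ℝ) * hstep < η := by
        have hlt : (n:ℝ)/(n+1) < 1 := (div_lt_one (by positivity)).mpr (by linarith)
        calc (n:ℝ) * hstep = η * ((n:ℝ)/(n+1)) := by rw [hhdef]; ring
        _ < η * 1 := mul_lt_mul_of_pos_left hlt hηpos
        _ = η := mul_one η
      have hsum : η - (n:ℝ)*hstep = hstep := by
        rw [hhdef]; field_simp; ring
      have hend : f (σ - η + n * hstep) ≤ hstep * ‖V‖ := by
        have h1 : σ - η ≤ σ - η + n*hstep := by linarith
        have h2 : σ - η + n*hstep ≤ σ := by linarith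
        have h3 := hfsmall (σ - η + n*hstep) h1 h2
        rw [show σ - (σ - η + (n:ℝ)*hstep) = η - (n:ℝ)*hstep by ring, hsum] at h3
        exact h3
      have hend2 : f (σ - η + n * hstep)^2 ≤ hstep^2 * ‖V‖^2 := by
        have := pow_le_pow_left₀ infDist_nonneg hend 2
        calc f (σ - η + n * hstep)^2 ≤ (hstep * ‖V‖)^2 := this
        _ = hstep^2 * ‖V‖^2 := by ring
      have heq3 : ((n:ℝ)+1) * (hstep^2 * ‖V‖^2) = η^2 * ‖V‖^2 / (n+1) := by
        rw [hhdef]; field_simp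
      nlinarith [hcl, hend2]
    -- final contradiction
    have hfpos0 : 0 < f (σ - η) := hfpos' _ le_rfl (by linarith)
    have hc : 0 < f (σ - η)^2 := pow_pos hfpos0 2
    obtain ⟨n, hn⟩ := exists_nat_gt (η^2*‖V‖^2 / f (σ - η)^2)
    have hiter := iter (n+1) (Nat.succ_pos n)
    have h1 : η^2*‖V‖^2 < f (σ - η)^2 * n := by
      have := (div_lt_iff₀ hc).mp hn
      linarith
    have h2 : η^2*‖V‖^2/((n+1:ℕ)+1) < f (σ - η)^2 := by
      rw [div_lt_iff₀ (by positivity)]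
      push_cast
      nlinarith [hc, (Nat.cast_nonneg n : (0:ℝ) ≤ n)]
    push_cast at hiter h2
    linarith
  constructor
  · exact P1
  · intro x₀ hx₀ hu0 t ht hseg
    by_contra hcon
    have hpos : 0 < u (x₀ - t • V) := lt_of_le_of_ne (hunn _) (Ne.symm hcon)
    have hb : x₀ - t • V ∈ ball (0:E d) 1 := hseg t ⟨ht.le, le_rfl⟩
    have := P1 (x₀ - t • V) ⟨hpos, hb⟩ t ht (by
      intro s hs
      have := hseg (t - s) ⟨by linarith [hs.2], by linarith [hs.1]⟩
      have heq : x₀ - t • V + s • V = x₀ - (t - s) • V := by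
        rw [sub_smul]; abel
      rwa [heq])
    have heq2 : x₀ - t • V + t • V = x₀ := by abel
    rw [heq2] at this
    rw [hu0] at this
    exact lt_irrefl 0 this
end
end

section
/- Let w₁, w₂ : closure(ℬ) → ℝ⁺ be continuous nonnegative functions on a bounded open set ℬ ⊂ ℝ^d with w₁ superharmonic (in the viscosity sense) on {w₁ > 0} ∩ D and w₂ superharmonic on {w₂ > 0} ∩ D, where D ⊂ ℬ is open. Suppose both satisfy the viscosity free-boundary supersolution condition |∇φ|² ≤ ∇φ·V at touching points from below on ∂{wᵢ>0} ∩ D. Then w := min{w₁, w₂} is continuous, superharmonic in the viscosity sense on {w > 0} ∩ D, and satisfies the same free-boundary supersolution condition on ∂{w>0} ∩ D. -/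
open Metric Set Filter
open scoped RealInnerProductSpace Topology

noncomputable section

/-- `w` is superharmonic in the viscosity sense on its positivity set inside `D`. -/
def ViscSuperharmonicOnPos {d : ℕ} (w : E d → ℝ) (D : Set (E d)) : Prop :=
  ∀ x₀ ∈ {x | 0 < w x} ∩ D, ∀ φ : E d → ℝ,
    ContDiff ℝ (⊤ : ℕ∞) φ → TouchesFromBelowAt φ w x₀ → laplacian φ x₀ ≤ 0

/-- Viscosity free-boundary supersolution condition on `∂{w>0} ∩ D`. -/
def ViscFBSupersol {d : ℕ} (w : E d → ℝ) (D : Set (E d)) (V : E d) : Prop :=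
  ∀ x₀ ∈ frontier {x | 0 < w x} ∩ D, ∀ φ : E d → ℝ,
    ContDiff ℝ (⊤ : ℕ∞) φ → TouchesFromBelowAt φ w x₀ →
    ‖gradient φ x₀‖ ^ 2 ≤ ⟪gradient φ x₀, V⟫

/-- the minimum of two viscosity supersolutions is a viscosity supersolution. -/
theorem min_of_supersolutions
    (d : ℕ) (ℬ D : Set (E d)) (hℬopen : IsOpen ℬ) (hℬbdd : Bornology.IsBounded ℬ)
    (hDopen : IsOpen D) (hDsub : D ⊆ ℬ) (V : E d)
    (w₁ w₂ : E d → ℝ)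
    (hc₁ : ContinuousOn w₁ (closure ℬ)) (hc₂ : ContinuousOn w₂ (closure ℬ))
    (hn₁ : ∀ x, 0 ≤ w₁ x) (hn₂ : ∀ x, 0 ≤ w₂ x)
    (hsh₁ : ViscSuperharmonicOnPos w₁ D) (hsh₂ : ViscSuperharmonicOnPos w₂ D)
    (hfb₁ : ViscFBSupersol w₁ D V) (hfb₂ : ViscFBSupersol w₂ D V) :
    ContinuousOn (fun x => min (w₁ x) (w₂ x)) (closure ℬ) ∧
    ViscSuperharmonicOnPos (fun x => min (w₁ x) (w₂ x)) D ∧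
    ViscFBSupersol (fun x => min (w₁ x) (w₂ x)) D V := by
  refine ⟨hc₁.inf hc₂, ?_, ?_⟩
  · intro x₀ hx₀ φ hφ htouch
    rcases le_total (w₁ x₀) (w₂ x₀) with h | h
    · refine hsh₁ x₀ ⟨show 0 < w₁ x₀ from lt_of_lt_of_le hx₀.1 (min_le_left _ _), hx₀.2⟩ φ hφ
        ⟨htouch.1.trans (min_eq_left h), htouch.2.mono fun x hx => hx.trans (min_le_left _ _)⟩
    · refine hsh₂ x₀ ⟨show 0 < w₂ x₀ from lt_of_lt_of_le hx₀.1 (min_le_right _ _), hx₀.2⟩ φ hφ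
        ⟨htouch.1.trans (min_eq_right h), htouch.2.mono fun x hx => hx.trans (min_le_right _ _)⟩
  · intro x₀ hx₀ φ hφ htouch
    have hx₀D := hx₀.2
    have hcont : ContinuousAt (fun x => min (w₁ x) (w₂ x)) x₀ :=
      (hc₁.inf hc₂).continuousAt
        (Filter.mem_of_superset (hℬopen.mem_nhds (hDsub hx₀D)) subset_closure)
    have hw0 : min (w₁ x₀) (w₂ x₀) = 0 := by
      by_contra hne
      have hpos : 0 < min (w₁ x₀) (w₂ x₀) :=
        lt_of_le_of_ne (le_min (hn₁ x₀) (hn₂ x₀)) (Ne.symm hne)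
      have : {x | 0 < min (w₁ x) (w₂ x)} ∈ 𝓝 x₀ := hcont (Ioi_mem_nhds hpos)
      exact hx₀.1.2 (mem_interior_iff_mem_nhds.2 this)
    rcases le_total (w₁ x₀) (w₂ x₀) with h | h
    · have h1 : w₁ x₀ = 0 := by have := min_eq_left h ▸ hw0; linarith
      have hfr : x₀ ∈ frontier {x | 0 < w₁ x} := by
        refine ⟨closure_mono (show {x | 0 < min (w₁ x) (w₂ x)} ⊆ {x | 0 < w₁ x} from
          fun x hx => show 0 < w₁ x from lt_of_lt_of_le hx (min_le_left _ _)) hx₀.1.1, ?_⟩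
        intro hint
        have := interior_subset hint
        simp [h1] at this
      exact hfb₁ x₀ ⟨hfr, hx₀D⟩ φ hφ
        ⟨htouch.1.trans (min_eq_left h), htouch.2.mono fun x hx => hx.trans (min_le_left _ _)⟩
    · have h2 : w₂ x₀ = 0 := by have := min_eq_right h ▸ hw0; linarith
      have hfr : x₀ ∈ frontier {x | 0 < w₂ x} := by
        refine ⟨closure_mono (show {x | 0 < min (w₁ x) (w₂ x)} ⊆ {x | 0 < w₂ x} from
          fun x hx => show 0 < w₂ x from lt_of_lt_of_le hx (min_le_right _ _)) hx₀.1.1, ?_⟩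
        intro hint
        have := interior_subset hint
        simp [h2] at this
      exact hfb₂ x₀ ⟨hfr, hx₀D⟩ φ hφ
        ⟨htouch.1.trans (min_eq_right h), htouch.2.mono fun x hx => hx.trans (min_le_right _ _)⟩
end
end
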